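/- arXiv:2106.01244 — 5 statements merged into one kernel-verified Lean document; each statement's English description precedes it below -/
import Mathlib

section
/- Let M be a weight sequence satisfying (M.2)' with constants C₀ ≥ 1, H > 1. Then for every q > 0 the function x ↦ exp(ω_M(q|x|) − ω_M(q H^{d+1} |x|)) is integrable on ℝ^d, where ω_M is the associated function of M. -/
/-- For a weight sequence satisfying (M.2)' with `H > 1`, the function
`x ↦ exp(ω_M(q|x|) − ω_M(q H^{d+1}|x|))` is integrable on `ℝ^d` for every `q > 0`. -/
theorem stmt3 (d : ℕ) (M : ℕ → ℝ) (C₀ H : ℝ) (hpos : ∀ p, 0 < M p)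
    (hweight : Filter.Tendsto (fun p : ℕ => (M p / M 0) ^ ((p : ℝ)⁻¹))
      Filter.atTop Filter.atTop)
    (hC₀ : 1 ≤ C₀) (hH : 1 < H)
    (hM2' : ∀ p : ℕ, M (p + 1) ≤ C₀ * H ^ p * M p)
    (ω : ℝ → ℝ)
    (hω : ∀ t : ℝ, 0 < t → ω t = ⨆ p : ℕ, Real.log (t ^ p * M 0 / M p))
    (hω0 : ω 0 = 0) :
    ∀ q : ℝ, 0 < q →
      MeasureTheory.Integrable
        (fun x : EuclideanSpace ℝ (Fin d) =>
          Real.exp (ω (q * ‖x‖) - ω (q * H ^ (d + 1) * ‖x‖))) := by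
  have hM0 : (0:ℝ) < M 0 := hpos 0
  have hHpos : (0:ℝ) < H := lt_trans one_pos hH
  have hC₀pos : (0:ℝ) < C₀ := lt_of_lt_of_le one_pos hC₀
  -- bounded above ranges
  have hbdd : ∀ t : ℝ, 0 < t →
      BddAbove (Set.range fun p : ℕ => Real.log (t ^ p * M 0 / M p)) := by
    intro t ht
    obtain ⟨N, hN⟩ := Filter.eventually_atTop.mp (hweight.eventually_ge_atTop t)
    refine ⟨((Finset.range (N+1)).sup' (by simp) fun p => Real.log (t ^ p * M 0 / M p)) ⊔ 0, ?_⟩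
    rintro y ⟨p, rfl⟩
    rcases le_or_gt p N with hp | hp
    · exact le_sup_of_le_left (Finset.le_sup' (fun p => Real.log (t ^ p * M 0 / M p))
        (Finset.mem_range.mpr (Nat.lt_succ_of_le hp)))
    · refine le_sup_of_le_right ?_
      have hp0 : p ≠ 0 := by omega
      have h1 : t ≤ (M p / M 0) ^ ((p : ℝ)⁻¹) := hN p hp.le
      have h2 : t ^ p ≤ M p / M 0 := by
        calc t ^ p ≤ ((M p / M 0) ^ ((p : ℝ)⁻¹)) ^ p :=
              pow_le_pow_left₀ ht.le h1 p
          _ = M p / M 0 := Real.rpow_inv_natCast_pow (div_pos (hpos p) hM0).le hp0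
      have h3 : t ^ p * M 0 / M p ≤ 1 := by
        rw [div_le_one (hpos p)]
        calc t ^ p * M 0 ≤ (M p / M 0) * M 0 := by nlinarith [hM0, pow_pos ht p]
          _ = M p := by field_simp
      calc Real.log (t ^ p * M 0 / M p) ≤ Real.log 1 :=
            Real.log_le_log (div_pos (mul_pos (pow_pos ht p) hM0) (hpos p)) h3
        _ = 0 := Real.log_one
  have hle : ∀ t : ℝ, 0 < t → ∀ p : ℕ, Real.log (t ^ p * M 0 / M p) ≤ ω t := by
    intro t ht p
    rw [hω t ht]
    exact le_ciSup (hbdd t ht) p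
  have hnonneg : ∀ t : ℝ, 0 < t → 0 ≤ ω t := by
    intro t ht
    have := hle t ht 0
    simpa [div_self hM0.ne'] using this
  have hmono : ∀ s t : ℝ, 0 ≤ s → s ≤ t → ω s ≤ ω t := by
    intro s t hs hst
    rcases eq_or_lt_of_le hs with rfl | hs'
    · rcases eq_or_lt_of_le hst with rfl | ht'
      · exact le_refl _
      · rw [hω0]; exact hnonneg t ht'
    · have ht' : 0 < t := lt_of_lt_of_le hs' hst
      rw [hω s hs']
      refine ciSup_le fun p => ?_
      refine le_trans ?_ (hle t ht' p)
      refine Real.log_le_log (div_pos (mul_pos (pow_pos hs' p) hM0) (hpos p)) ?_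
      gcongr <;> first
        | exact (hpos p).le
        | exact pow_le_pow_left₀ hs hst p
  -- one-step inequality
  have hstep : ∀ t : ℝ, 0 < t → ω t + Real.log (H * t / C₀) ≤ ω (H * t) := by
    intro t ht
    have hHt : 0 < H * t := by positivity
    have key : ∀ p : ℕ, Real.log (t ^ p * M 0 / M p) ≤ ω (H * t) - Real.log (H * t / C₀) := by
      intro p
      have h1 : Real.log (t ^ p * M 0 / M p) + Real.log (H * t / C₀)
          ≤ Real.log ((H * t) ^ (p + 1) * M 0 / M (p + 1)) := by
        have hA : (0:ℝ) < t ^ p * M 0 / M p := div_pos (mul_pos (pow_pos ht p) hM0) (hpos p)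
        rw [← Real.log_mul hA.ne' (by positivity)]
        have hMp1 : 0 < M (p + 1) := hpos (p + 1)
        apply Real.log_le_log (by positivity)
        have hb : M (p+1) ≤ C₀ * H ^ p * M p := hM2' p
        rw [div_mul_div_comm, div_le_div_iff₀ (mul_pos (hpos p) hC₀pos) hMp1]
        have hexp : t ^ p * M 0 * (H * t) * M (p+1) ≤ t ^ p * M 0 * (H * t) * (C₀ * H ^ p * M p) := by
          have : (0:ℝ) < t ^ p * M 0 * (H * t) := by positivity
          nlinarith
        calc t ^ p * M 0 * (H * t) * M (p+1)
            ≤ t ^ p * M 0 * (H * t) * (C₀ * H ^ p * M p) := hexp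
          _ = (H * t) ^ (p+1) * M 0 * (M p * C₀) := by ring
      have h2 := hle (H * t) hHt (p + 1)
      linarith
    have := ciSup_le key
    rw [← hω t ht] at this
    linarith
  -- iterated inequality
  have hiter : ∀ k : ℕ, ∀ t : ℝ, 0 < t →
      ω t + k * Real.log (H * t / C₀) ≤ ω (H ^ k * t) := by
    intro k
    induction k with
    | zero => intro t ht; simp
    | succ k ih =>
      intro t ht
      have hHk : (1:ℝ) ≤ H ^ k := one_le_pow₀ hH.le
      have hHkt : 0 < H ^ k * t := by positivity
      have h1 := ih t ht
      have h2 := hstep (H ^ k * t) hHkt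
      have h3 : Real.log (H * t / C₀) ≤ Real.log (H * (H ^ k * t) / C₀) := by
        apply Real.log_le_log (by positivity)
        rw [div_le_div_iff₀ hC₀pos hC₀pos]
        nlinarith [mul_nonneg (mul_nonneg (mul_nonneg (sub_nonneg.mpr hHk) hHpos.le) ht.le) hC₀pos.le]
      have h4 : H ^ (k + 1) * t = H * (H ^ k * t) := by ring
      rw [h4]
      push_cast
      nlinarith
  -- now the main proof
  intro q hq
  have hHd1 : (1:ℝ) ≤ H ^ (d + 1) := one_le_pow₀ hH.le
  set C : ℝ := (C₀ / (q * H)) ^ (d + 1) with hC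
  have hCpos : 0 < C := by positivity
  set K : ℝ := 2 ^ (d + 1) * max 1 C with hK
  have hKpos : 0 < K := by positivity
  -- exponent is nonpositive
  have hexp_le_one : ∀ x : EuclideanSpace ℝ (Fin d),
      Real.exp (ω (q * ‖x‖) - ω (q * H ^ (d + 1) * ‖x‖)) ≤ 1 := by
    intro x
    have h1 : q * ‖x‖ ≤ q * H ^ (d+1) * ‖x‖ := by
      nlinarith [mul_nonneg (mul_nonneg (sub_nonneg.mpr hHd1) hq.le) (norm_nonneg x)]
    have := hmono (q * ‖x‖) (q * H ^ (d+1) * ‖x‖) (by positivity) h1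
    calc Real.exp (ω (q * ‖x‖) - ω (q * H ^ (d + 1) * ‖x‖)) ≤ Real.exp 0 := by
          apply Real.exp_le_exp.mpr; linarith
      _ = 1 := Real.exp_zero
  -- decay bound for t > 0
  have hdecay : ∀ x : EuclideanSpace ℝ (Fin d), 0 < ‖x‖ →
      Real.exp (ω (q * ‖x‖) - ω (q * H ^ (d + 1) * ‖x‖))
        ≤ (C₀ / (q * H * ‖x‖)) ^ (d + 1) := by
    intro x hx
    have hqx : 0 < q * ‖x‖ := by positivity
    have h1 := hiter (d + 1) (q * ‖x‖) hqx
    have harg : q * H ^ (d + 1) * ‖x‖ = H ^ (d + 1) * (q * ‖x‖) := by ring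
    rw [harg]
    have h2 : ω (q * ‖x‖) - ω (H ^ (d + 1) * (q * ‖x‖))
        ≤ -((d + 1 : ℕ) * Real.log (H * (q * ‖x‖) / C₀)) := by linarith
    calc Real.exp (ω (q * ‖x‖) - ω (H ^ (d + 1) * (q * ‖x‖)))
        ≤ Real.exp (((d + 1 : ℕ) : ℝ) * Real.log (C₀ / (q * H * ‖x‖))) := by
          apply Real.exp_le_exp.mpr
          have : Real.log (C₀ / (q * H * ‖x‖)) = - Real.log (H * (q * ‖x‖) / C₀) := by
            rw [← Real.log_inv, inv_div]
            congr 1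
            ring
          rw [this]
          push_cast
          push_cast at h2
          linarith
      _ = (C₀ / (q * H * ‖x‖)) ^ (d + 1) := by
          rw [Real.exp_nat_mul, Real.exp_log (by positivity)]
  -- measurability
  have hm : Measurable fun x : EuclideanSpace ℝ (Fin d) =>
      Real.exp (ω (q * ‖x‖) - ω (q * H ^ (d + 1) * ‖x‖)) := by
    have hω'mono : Monotone fun t : ℝ => ω (max t 0) := by
      intro a b hab
      exact hmono _ _ (le_max_right _ _) (max_le_max hab le_rfl)
    have hω'meas : Measurable fun t : ℝ => ω (max t 0) := hω'mono.measurable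
    have heq : (fun x : EuclideanSpace ℝ (Fin d) =>
        Real.exp (ω (q * ‖x‖) - ω (q * H ^ (d + 1) * ‖x‖)))
        = fun x => Real.exp (ω (max (q * ‖x‖) 0) - ω (max (q * H ^ (d + 1) * ‖x‖) 0)) := by
      funext x
      rw [max_eq_left (by positivity), max_eq_left (by positivity)]
    rw [heq]
    exact Real.measurable_exp.comp
      ((hω'meas.comp (measurable_norm.const_mul q)).sub
        (hω'meas.comp (measurable_norm.const_mul (q * H ^ (d + 1)))))
  -- dominating function
  have hfin : (Module.finrank ℝ (EuclideanSpace ℝ (Fin d)) : ℝ) < (d + 1 : ℕ) := by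
    rw [finrank_euclideanSpace_fin]
    exact_mod_cast Nat.lt_succ_self d
  have hg : MeasureTheory.Integrable
      (fun x : EuclideanSpace ℝ (Fin d) => K * (1 + ‖x‖) ^ (-((d + 1 : ℕ) : ℝ))) :=
    (integrable_one_add_norm hfin).const_mul K
  refine hg.mono' hm.aestronglyMeasurable (Filter.Eventually.of_forall fun x => ?_)
  have hx0 : (0:ℝ) ≤ ‖x‖ := norm_nonneg x
  have h1x : (0:ℝ) < 1 + ‖x‖ := by positivity
  rw [Real.norm_of_nonneg (Real.exp_nonneg _)]
  have hrpow : (1 + ‖x‖) ^ (-((d + 1 : ℕ) : ℝ)) = ((1 + ‖x‖) ^ (d + 1))⁻¹ := by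
    rw [Real.rpow_neg h1x.le, Real.rpow_natCast]
  rw [hrpow, ← div_eq_mul_inv, le_div_iff₀ (by positivity)]
  rcases le_or_gt ‖x‖ 1 with hx1 | hx1
  · have hb1 : (1 + ‖x‖) ^ (d + 1) ≤ 2 ^ (d + 1) :=
      pow_le_pow_left₀ (by linarith) (by linarith) _
    have hf1 := hexp_le_one x
    have : (1:ℝ) ≤ max 1 C := le_max_left _ _
    calc Real.exp _ * (1 + ‖x‖) ^ (d + 1) ≤ 1 * 2 ^ (d + 1) := by
          apply mul_le_mul hf1 hb1 (by positivity) (by norm_num)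
      _ ≤ K := by rw [hK, one_mul]; nlinarith [pow_pos (by norm_num : (0:ℝ) < 2) (d+1)]
  · have hx0' : (0:ℝ) < ‖x‖ := lt_trans one_pos hx1
    have hf2 := hdecay x hx0'
    have hb2 : (1 + ‖x‖) ^ (d + 1) ≤ 2 ^ (d + 1) * ‖x‖ ^ (d + 1) := by
      rw [← mul_pow]
      exact pow_le_pow_left₀ (by linarith) (by linarith) _
    have hCx : (C₀ / (q * H * ‖x‖)) ^ (d + 1) = C / ‖x‖ ^ (d + 1) := by
      rw [hC, ← div_pow]
      congr 1
      field_simp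
    calc Real.exp _ * (1 + ‖x‖) ^ (d + 1)
        ≤ (C / ‖x‖ ^ (d + 1)) * (2 ^ (d + 1) * ‖x‖ ^ (d + 1)) := by
          apply mul_le_mul (hCx ▸ hf2) hb2 (by positivity) (by positivity)
      _ = 2 ^ (d + 1) * C := by field_simp
      _ ≤ K := by
          rw [hK]
          have : C ≤ max 1 C := le_max_right _ _
          nlinarith [pow_pos (by norm_num : (0:ℝ) < 2) (d+1)]
end

section
/- Let E be a complete locally convex Hausdorff space and f : ℝ^d → E continuous. If for every continuous seminorm p on E the function p ∘ f is Lebesgue integrable, then f has a Pettis integral, i.e., there exists e ∈ E with ⟨φ, e⟩ = ∫_{ℝ^d} ⟨φ, f(x)⟩ dx for all φ ∈ E'. Moreover p(e) ≤ ∫ p(f(x)) dx for every continuous seminorm p. -/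
/-!
For a continuous seminorm `p`, Hahn–Banach gives `p x = φ x` for some `φ` with `|φ| ≤ p`.
Hence a sequence `u` in a complete locally convex space converges as soon as `φ (u n)` converges
uniformly over all such `φ`, and its limit is then the weak limit. On a compact set, uniform
continuity makes the Riemann sums over finer and finer tagged partitions such a sequence; on the
whole space, so are the integrals over an exhausting sequence of compact sets `Kₙ`, because the
tails `∫_{Kₙᶜ} p ∘ f` tend to zero. The seminorm bound is `p e = φ e = ∫ φ ∘ f ≤ ∫ p ∘ f`.
-/

open MeasureTheory Filter Topology Metric Set Uniformity
open scoped Function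

namespace Seminorm

variable {E : Type*} [AddCommGroup E] [Module ℝ E] [TopologicalSpace E] [PolynormableSpace ℝ E]

theorem exists_dual_vector {p : Seminorm ℝ E} (hp : Continuous p) (x : E) :
    ∃ φ : StrongDual ℝ E, (∀ y, |φ y| ≤ p y) ∧ φ x = p x := by
  have hker (c : ℝ) (hc : c • x = 0) : RingHom.id ℝ c • p x = 0 := by
    have := congrArg p hc
    rw [map_smul_eq_mul, map_zero] at this
    simpa using this
  let φ₀ : E →ₗ.[ℝ] ℝ := LinearPMap.mkSpanSingleton' x (p x) hker
  have hφ₀ : ∀ y : φ₀.domain, φ₀ y ≤ p y := by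
    rintro ⟨y, hy⟩
    obtain ⟨c, rfl⟩ := Submodule.mem_span_singleton.mp hy
    rw [LinearPMap.mkSpanSingleton'_apply, map_smul_eq_mul, RingHom.id_apply, smul_eq_mul,
      Real.norm_eq_abs]
    exact mul_le_mul_of_nonneg_right (le_abs_self c) (apply_nonneg p x)
  obtain ⟨φ, hφ, hφp⟩ :=
    Module.Dual.exists_continuous_extension_of_le_seminorm_real _ φ₀.toFun hp hφ₀
  exact ⟨φ, hφp, (hφ ⟨x, Submodule.mem_span_singleton_self x⟩).trans
    (LinearPMap.mkSpanSingleton'_apply_self _ _ hker _)⟩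

end Seminorm

theorem exists_forall_dual_eq_of_tendstoUniformlyOn {E : Type*} [AddCommGroup E] [Module ℝ E]
    [UniformSpace E] [IsUniformAddGroup E] [PolynormableSpace ℝ E] [CompleteSpace E]
    {u : ℕ → E} {L : StrongDual ℝ E → ℝ}
    (h : ∀ p : Seminorm ℝ E, Continuous p →
      TendstoUniformlyOn (fun n φ => φ (u n)) L atTop {φ | ∀ x, |φ x| ≤ p x}) :
    ∃ e, ∀ φ : StrongDual ℝ E, φ e = L φ := by
  have hcauchy : CauchySeq u := by
    rw [cauchySeq_iff_tendsto, uniformity_eq_comap_nhds_zero, tendsto_comap_iff,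
      (PolynormableSpace.withSeminorms ℝ E).tendsto_nhds, ← prod_atTop_atTop_eq]
    rintro ⟨p, hp⟩ ε hε
    have hu := Metric.tendstoUniformlyOn_iff.mp (h p hp) (ε / 2) (half_pos hε)
    filter_upwards [hu.prod_mk hu] with ⟨m, n⟩ ⟨hm, hn⟩
    obtain ⟨φ, hφp, hφ⟩ := p.exists_dual_vector hp (u n - u m)
    have hφm := hm φ hφp
    have hφn := hn φ hφp
    rw [Real.dist_eq, abs_lt] at hφm hφn
    simp only [Function.comp_apply, Prod.map_fst, Prod.map_snd, sub_zero, ← hφ, map_sub]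
    linarith
  obtain ⟨e, he⟩ := cauchySeq_tendsto_of_complete hcauchy
  refine ⟨e, fun φ => tendsto_nhds_unique ((φ.continuous.tendsto e).comp he) ?_⟩
  exact (h (φ : E →ₗ[ℝ] ℝ).toSeminorm φ.continuous.norm).tendsto_at
    fun x => (Real.norm_eq_abs _).ge

theorem IsCompact.exists_pos_forall_seminorm_sub_lt {X E : Type*} [PseudoMetricSpace X]
    [AddCommGroup E] [Module ℝ E] [UniformSpace E] [IsUniformAddGroup E] {K : Set X}
    (hK : IsCompact K) {f : X → E} (hf : ContinuousOn f K) {p : Seminorm ℝ E}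
    (hp : Continuous p) {ε : ℝ} (hε : 0 < ε) :
    ∃ δ > 0, ∀ x ∈ K, ∀ y ∈ K, dist x y < δ → p (f x - f y) < ε := by
  have hU : {q : E × E | p (q.1 - q.2) < ε} ∈ 𝓤 E := by
    rw [uniformity_eq_comap_nhds_zero E]
    refine mem_comap.mpr ⟨{x | p x < ε}, (isOpen_lt hp continuous_const).mem_nhds (by simpa),
      fun q hq => ?_⟩
    simpa [map_sub_rev] using hq
  exact (uniformity_basis_dist.uniformContinuousOn_iff (𝓤 E).basis_sets).mp
    (hK.uniformContinuousOn_of_continuous hf) _ hU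

section Riemann

variable {X : Type*} [MetricSpace X] [MeasurableSpace X]

structure TaggedPartition (K : Set X) (δ : ℝ) where
  n : ℕ
  piece : Fin n → Set X
  tag : Fin n → X
  measurableSet_piece : ∀ i, MeasurableSet (piece i)
  pairwise_disjoint_piece : Pairwise (Disjoint on piece)
  iUnion_piece : ⋃ i, piece i = K
  tag_mem : ∀ i, tag i ∈ K
  dist_tag_lt : ∀ i, ∀ x ∈ piece i, dist x (tag i) < δ

theorem IsCompact.nonempty_taggedPartition [OpensMeasurableSpace X] {K : Set X}
    (hK : IsCompact K) {δ : ℝ} (hδ : 0 < δ) : Nonempty (TaggedPartition K δ) := by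
  obtain ⟨t, htK, ht, hcover⟩ := hK.finite_cover_balls hδ
  obtain ⟨n, c, rfl⟩ := ht.fin_embedding
  let B i := K ∩ ball (c i) δ
  refine ⟨⟨n, disjointed B, c, fun i => ?_, disjoint_disjointed B, ?_,
    fun i => htK (mem_range_self i), fun i x hx => (disjointed_subset B i hx).2⟩⟩
  · rw [disjointed_apply, Finset.sup_set_eq_biUnion]
    exact (hK.measurableSet.inter measurableSet_ball).diff
      (Finset.measurableSet_biUnion _ fun j _ => hK.measurableSet.inter measurableSet_ball)
  · rw [iUnion_disjointed, ← inter_iUnion, inter_eq_left]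
    simpa using hcover

namespace TaggedPartition

variable {K : Set X} {δ : ℝ} (P : TaggedPartition K δ)

noncomputable def riemannSum {E : Type*} [AddCommMonoid E] [Module ℝ E] (μ : Measure X)
    (f : X → E) : E :=
  ∑ i, μ.real (P.piece i) • f (P.tag i)

theorem map_riemannSum {E F 𝓕 : Type*} [AddCommMonoid E] [Module ℝ E] [AddCommMonoid F]
    [Module ℝ F] [FunLike 𝓕 E F] [LinearMapClass 𝓕 ℝ E F] (φ : 𝓕) (μ : Measure X)
    (f : X → E) : φ (P.riemannSum μ f) = P.riemannSum μ (fun x => φ (f x)) := by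
  simp only [riemannSum, map_sum, map_smul]

theorem piece_subset (i : Fin P.n) : P.piece i ⊆ K :=
  (subset_iUnion P.piece i).trans P.iUnion_piece.subset

theorem abs_riemannSum_sub_setIntegral_le {μ : Measure X} (hK : μ K ≠ ⊤) {g : X → ℝ}
    (hg : IntegrableOn g K μ) {ε : ℝ} (hε : ∀ i, ∀ x ∈ P.piece i, |g (P.tag i) - g x| ≤ ε) :
    |P.riemannSum μ g - ∫ x in K, g x ∂μ| ≤ ε * μ.real K := by
  have hfin i : μ (P.piece i) < ⊤ := (measure_mono (P.piece_subset i)).trans_lt hK.lt_top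
  have hpiece i : |μ.real (P.piece i) • g (P.tag i) - ∫ x in P.piece i, g x ∂μ| ≤
      ε * μ.real (P.piece i) := by
    have hconst : IntegrableOn (fun _ => g (P.tag i)) (P.piece i) μ :=
      integrableOn_const (hfin i).ne
    rw [← setIntegral_const, ← integral_sub hconst (hg.mono_set (P.piece_subset i))]
    exact norm_setIntegral_le_of_norm_le_const (hfin i) fun x hx =>
      (Real.norm_eq_abs _).trans_le (hε i x hx)
  have hsplit : ∫ x in K, g x ∂μ = ∑ i, ∫ x in P.piece i, g x ∂μ := by
    rw [← integral_iUnion_fintype P.measurableSet_piece P.pairwise_disjoint_piece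
      fun i => hg.mono_set (P.piece_subset i), P.iUnion_piece]
  calc |P.riemannSum μ g - ∫ x in K, g x ∂μ|
      ≤ ∑ i, |μ.real (P.piece i) • g (P.tag i) - ∫ x in P.piece i, g x ∂μ| := by
        rw [hsplit, riemannSum, ← Finset.sum_sub_distrib]
        exact Finset.abs_sum_le_sum_abs _ _
    _ ≤ ∑ i, ε * μ.real (P.piece i) := Finset.sum_le_sum fun i _ => hpiece i
    _ = ε * μ.real K := by
        rw [← Finset.mul_sum, ← measureReal_iUnion_fintype P.pairwise_disjoint_piece
          P.measurableSet_piece fun i => (hfin i).ne, P.iUnion_piece]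

end TaggedPartition

end Riemann

section Pettis

variable {X E : Type*} [MeasurableSpace X] [AddCommGroup E] [Module ℝ E]

def HasPettisIntegral [TopologicalSpace E] (f : X → E) (μ : Measure X) (e : E) : Prop :=
  ∀ φ : StrongDual ℝ E, Integrable (fun x => φ (f x)) μ ∧ ∫ x, φ (f x) ∂μ = φ e

theorem HasPettisIntegral.seminorm_le_integral [TopologicalSpace E] [PolynormableSpace ℝ E]
    {f : X → E} {μ : Measure X} {e : E} (he : HasPettisIntegral f μ e) {p : Seminorm ℝ E}
    (hp : Continuous p) (hpf : Integrable (fun x => p (f x)) μ) :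
    p e ≤ ∫ x, p (f x) ∂μ := by
  obtain ⟨φ, hφp, hφe⟩ := p.exists_dual_vector hp e
  rw [← hφe, ← (he φ).2]
  exact integral_mono (he φ).1 hpf fun x => (le_abs_self _).trans (hφp _)

variable [MetricSpace X] [OpensMeasurableSpace X] (μ : Measure X) [IsFiniteMeasureOnCompacts μ]
  [UniformSpace E] [IsUniformAddGroup E] [PolynormableSpace ℝ E] [CompleteSpace E]

theorem IsCompact.exists_hasPettisIntegral {K : Set X} (hK : IsCompact K) {f : X → E}
    (hf : Continuous f) : ∃ e, HasPettisIntegral f (μ.restrict K) e := by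
  let P (m : ℕ) : TaggedPartition K (1 / (m + 1)) :=
    (hK.nonempty_taggedPartition Nat.one_div_pos_of_nat).some
  have hint (φ : StrongDual ℝ E) : IntegrableOn (fun x => φ (f x)) K μ :=
    (φ.continuous.comp hf).continuousOn.integrableOn_compact hK
  refine (exists_forall_dual_eq_of_tendstoUniformlyOn (u := fun m => (P m).riemannSum μ f)
    (L := fun φ => ∫ x in K, φ (f x) ∂μ) fun p hp => ?_).imp
    fun e he φ => ⟨hint φ, (he φ).symm⟩
  rw [Metric.tendstoUniformlyOn_iff]
  intro ε hε
  have hε' : 0 < ε / (μ.real K + 1) := by positivity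
  obtain ⟨δ, hδ, hfδ⟩ := hK.exists_pos_forall_seminorm_sub_lt hf.continuousOn hp hε'
  obtain ⟨N, hN⟩ := exists_nat_one_div_lt hδ
  filter_upwards [eventually_ge_atTop N] with m hm φ hφ
  have hfine : ∀ i, ∀ x ∈ (P m).piece i,
      |φ (f ((P m).tag i)) - φ (f x)| ≤ ε / (μ.real K + 1) := by
    intro i x hx
    have hdist : dist ((P m).tag i) x < δ := by
      rw [dist_comm]
      exact ((P m).dist_tag_lt i x hx).trans_le ((Nat.one_div_le_one_div hm).trans hN.le)
    rw [← map_sub]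
    exact (hφ _).trans (hfδ _ ((P m).tag_mem i) _ ((P m).piece_subset i hx) hdist).le
  rw [dist_comm, Real.dist_eq, (P m).map_riemannSum]
  calc _ ≤ ε / (μ.real K + 1) * μ.real K :=
        (P m).abs_riemannSum_sub_setIntegral_le hK.measure_ne_top (hint φ) hfine
    _ < ε := by
        rw [div_mul_eq_mul_div, div_lt_iff₀ (by positivity)]
        nlinarith

theorem exists_hasPettisIntegral [SigmaCompactSpace X] {f : X → E} (hf : Continuous f)
    (hint : ∀ p : Seminorm ℝ E, Continuous p → Integrable (fun x => p (f x)) μ) :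
    ∃ e, HasPettisIntegral f μ e := by
  have hK n := isCompact_compactCovering X n
  choose I hI using fun n => (hK n).exists_hasPettisIntegral μ hf
  have hintφ (φ : StrongDual ℝ E) : Integrable (fun x => φ (f x)) μ :=
    (hint (φ : E →ₗ[ℝ] ℝ).toSeminorm φ.continuous.norm).mono'
      (φ.continuous.comp hf).aestronglyMeasurable (.of_forall fun _ => le_rfl)
  refine (exists_forall_dual_eq_of_tendstoUniformlyOn (u := I)
    (L := fun φ => ∫ x, φ (f x) ∂μ) fun p hp => ?_).imp fun e he φ => ⟨hintφ φ, (he φ).symm⟩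
  have htail : Tendsto (fun n => ∫ x in (compactCovering X n)ᶜ, p (f x) ∂μ) atTop (𝓝 0) := by
    have := tendsto_setIntegral_of_antitone (fun n => (hK n).measurableSet.compl)
      (fun m n hmn => compl_subset_compl.mpr (compactCovering_subset X hmn))
      ⟨0, (hint p hp).integrableOn⟩
    rwa [← compl_iUnion, iUnion_compactCovering, compl_univ, setIntegral_empty] at this
  rw [Metric.tendstoUniformlyOn_iff]
  intro ε hε
  filter_upwards [htail.eventually (gt_mem_nhds hε)] with n hn φ hφ
  rw [Real.dist_eq, ← (hI n φ).2, ← integral_add_compl (hK n).measurableSet (hintφ φ),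
    add_sub_cancel_left, ← Real.norm_eq_abs]
  refine (norm_integral_le_of_norm_le (hint p hp).integrableOn ?_).trans_lt hn
  exact .of_forall fun x => (Real.norm_eq_abs _).trans_le (hφ _)

end Pettis

theorem stmt5_general (d : ℕ) {E : Type*} [AddCommGroup E] [Module ℝ E]
    [UniformSpace E] [IsUniformAddGroup E] [ContinuousSMul ℝ E]
    [LocallyConvexSpace ℝ E] [CompleteSpace E]
    (f : EuclideanSpace ℝ (Fin d) → E) (hf : Continuous f)
    (hint : ∀ p : Seminorm ℝ E, Continuous ⇑p → Integrable (fun x => p (f x))) :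
    ∃ e : E,
      (∀ φ : E →L[ℝ] ℝ,
        Integrable (fun x => φ (f x)) ∧ (∫ x, φ (f x)) = φ e) ∧
      (∀ p : Seminorm ℝ E, Continuous ⇑p → p e ≤ ∫ x, p (f x)) := by
  obtain ⟨e, he⟩ := exists_hasPettisIntegral volume hf hint
  exact ⟨e, he, fun p hp => he.seminorm_le_integral hp (hint p hp)⟩

/-- Existence of the Pettis integral of a continuous function into a complete lcHs
whose composition with every continuous seminorm is integrable, together with the
seminorm bound on the integral. -/
theorem stmt5 (d : ℕ) {E : Type*} [AddCommGroup E] [Module ℝ E]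
    [UniformSpace E] [IsUniformAddGroup E] [ContinuousSMul ℝ E]
    [LocallyConvexSpace ℝ E] [T2Space E] [CompleteSpace E]
    (f : EuclideanSpace ℝ (Fin d) → E) (hf : Continuous f)
    (hint : ∀ p : Seminorm ℝ E, Continuous ⇑p → Integrable (fun x => p (f x))) :
    ∃ e : E,
      (∀ φ : E →L[ℝ] ℝ,
        Integrable (fun x => φ (f x)) ∧ (∫ x, φ (f x)) = φ e) ∧
      (∀ p : Seminorm ℝ E, Continuous ⇑p → p e ≤ ∫ x, p (f x)) :=
  stmt5_general d f hf hint
end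

section
/- Let M be a weight sequence satisfying (M.2): M_{p+q} ≤ C₀ H^{p+q} M_p M_q, and let E, F be Banach spaces with a bilinear map * : E × F → E satisfying ‖f*g‖_E ≤ ‖f‖_E ‖g‖_F. Suppose further (f_α)_{α∈ℕ^d} satisfies sup_α (2ℓH)^{|α|} M_α ‖f_α‖_E < ∞ and ψ is such that for all multi-indices δ, ψ^{(δ)} ∈ F with sup_δ ‖ψ^{(δ)}‖_F / ((ℓ/H)^{|δ|} M_δ) < ∞. Then for every γ ∈ ℕ^d, the series Σ_α f_α * ψ^{(α+γ)} converges absolutely in E and its norm is bounded by 2^d C₀ ℓ^{|γ|} M_γ times the product of the two suprema. -/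
/-!
By (M.2) the weights of `f_α` and `ψ^{(α+γ)}` combine into
`‖f_α‖ ‖ψ^{(α+γ)}‖ ≤ C₀ ℓ^{|γ|} M_{|γ|} Cf Cg (2H)^{-|α|} ≤ C₀ ℓ^{|γ|} M_{|γ|} Cf Cg 2^{-|α|}`,
and `Σ_α 2^{-|α|} = 2^d` is a product of `d` geometric series.
-/

open Finset

theorem pow_mul_weight_add_le {M : ℕ → ℝ} {C₀ H ℓ : ℝ}
    (hM2 : ∀ p q : ℕ, M (p + q) ≤ C₀ * H ^ (p + q) * M p * M q) (hH : 0 < H) (hℓ : 0 ≤ ℓ)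
    (p q : ℕ) :
    (ℓ / H) ^ (p + q) * M (p + q) ≤ C₀ * ℓ ^ q * M q * ((2 * ℓ * H) ^ p * M p) * (2 * H)⁻¹ ^ p :=
  calc (ℓ / H) ^ (p + q) * M (p + q)
      ≤ (ℓ / H) ^ (p + q) * (C₀ * H ^ (p + q) * M p * M q) := by gcongr; exact hM2 p q
    _ = _ := by rw [div_pow, mul_pow, mul_pow, inv_pow, mul_pow, pow_add, pow_add]; field_simp

theorem mul_le_of_weight_bounds {M : ℕ → ℝ} {C₀ H ℓ : ℝ}
    (hM2 : ∀ p q : ℕ, M (p + q) ≤ C₀ * H ^ (p + q) * M p * M q) (hM : ∀ p, 0 < M p)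
    (hC₀ : 0 ≤ C₀) (hH : 1 ≤ H) (hℓ : 0 < ℓ) {p q : ℕ} {x y Cf Cg : ℝ} (hx₀ : 0 ≤ x) (hy₀ : 0 ≤ y)
    (hx : (2 * ℓ * H) ^ p * M p * x ≤ Cf) (hy : y ≤ Cg * (ℓ / H) ^ (p + q) * M (p + q)) :
    x * y ≤ C₀ * ℓ ^ q * M q * Cf * Cg * 2⁻¹ ^ p := by
  have hH₀ : 0 < H := one_pos.trans_le hH
  have hCf : 0 ≤ Cf := hx.trans' (by have := hM p; positivity)
  have hCg : 0 ≤ Cg := by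
    have := hM (p + q)
    exact nonneg_of_mul_nonneg_left (hy₀.trans (by rwa [mul_assoc] at hy)) (by positivity)
  have hK : 0 ≤ Cg * (C₀ * ℓ ^ q * M q) := by have := hM q; positivity
  calc x * y ≤ x * (Cg * ((ℓ / H) ^ (p + q) * M (p + q))) :=
        mul_le_mul_of_nonneg_left (hy.trans_eq (mul_assoc _ _ _)) hx₀
    _ ≤ x * (Cg * (C₀ * ℓ ^ q * M q * ((2 * ℓ * H) ^ p * M p) * (2 * H)⁻¹ ^ p)) := by
        gcongr x * (Cg * ?_); exact pow_mul_weight_add_le hM2 hH₀ hℓ.le p q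
    _ = Cg * (C₀ * ℓ ^ q * M q) * (2 * H)⁻¹ ^ p * ((2 * ℓ * H) ^ p * M p * x) := by ring
    _ ≤ Cg * (C₀ * ℓ ^ q * M q) * (2 * H)⁻¹ ^ p * Cf := by gcongr
    _ ≤ Cg * (C₀ * ℓ ^ q * M q) * 2⁻¹ ^ p * Cf := by gcongr; linarith
    _ = C₀ * ℓ ^ q * M q * Cf * Cg * 2⁻¹ ^ p := by ring

theorem hasSum_geometric_pow_sum {r : ℝ} (h₀ : 0 ≤ r) (h₁ : r < 1) (d : ℕ) :
    HasSum (fun α : Fin d → ℕ => r ^ ∑ i, α i) ((1 - r)⁻¹ ^ d) := by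
  induction d with
  | zero => simp
  | succ d ih =>
    have hgeo := hasSum_geometric_of_lt_one h₀ h₁
    have hprod : Summable fun x : ℕ × (Fin d → ℕ) => r ^ x.1 * r ^ ∑ i, x.2 i := by
      apply hgeo.summable.mul_of_nonneg ih.summable <;> intro _ <;> positivity
    have hcons := (Fin.consEquiv fun _ => ℕ).symm.hasSum_iff.mpr (hgeo.mul ih hprod)
    have hsplit : (fun x : ℕ × (Fin d → ℕ) => r ^ x.1 * r ^ ∑ i, x.2 i) ∘
        (Fin.consEquiv fun _ => ℕ).symm = fun α => r ^ ∑ i, α i := by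
      ext α
      simp [Fin.consEquiv, Fin.sum_univ_succ, pow_add, Fin.tail]
    rwa [hsplit, ← pow_succ'] at hcons

theorem stmt11_general (d : ℕ) {E F : Type*} [NormedAddCommGroup E] [NormedAddCommGroup F]
    (M : ℕ → ℝ) (C₀ H : ℝ) (hpos : ∀ p, 0 < M p)
    (hC₀ : 1 ≤ C₀) (hH : 1 ≤ H)
    (hM2 : ∀ p q : ℕ, M (p + q) ≤ C₀ * H ^ (p + q) * M p * M q)
    (B : E → F → E) (hB : ∀ (e : E) (f : F), ‖B e f‖ ≤ ‖e‖ * ‖f‖)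
    (ℓ : ℝ) (hℓ : 0 < ℓ)
    (f : (Fin d → ℕ) → E) (ψd : (Fin d → ℕ) → F) (Cf Cg : ℝ)
    (hf : ∀ α : Fin d → ℕ, (2 * ℓ * H) ^ (∑ i, α i) * M (∑ i, α i) * ‖f α‖ ≤ Cf)
    (hψ : ∀ δ : Fin d → ℕ, ‖ψd δ‖ ≤ Cg * (ℓ / H) ^ (∑ i, δ i) * M (∑ i, δ i)) :
    ∀ γ : Fin d → ℕ,
      Summable (fun α : Fin d → ℕ => ‖B (f α) (ψd (α + γ))‖) ∧
      ‖∑' α : Fin d → ℕ, B (f α) (ψd (α + γ))‖ ≤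
        2 ^ d * C₀ * ℓ ^ (∑ i, γ i) * M (∑ i, γ i) * Cf * Cg := by
  intro γ
  set C := C₀ * ℓ ^ (∑ i, γ i) * M (∑ i, γ i) * Cf * Cg
  have hterm (α : Fin d → ℕ) : ‖B (f α) (ψd (α + γ))‖ ≤ C * 2⁻¹ ^ ∑ i, α i := by
    refine (hB _ _).trans (mul_le_of_weight_bounds hM2 hpos (by linarith) hH hℓ
      (norm_nonneg _) (norm_nonneg _) (hf α) ?_)
    simpa only [Pi.add_apply, sum_add_distrib] using hψ (α + γ)
  have hgeo := (hasSum_geometric_pow_sum (r := 2⁻¹) (by norm_num) (by norm_num) d).mul_left C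
  rw [show (1 - 2⁻¹ : ℝ)⁻¹ = 2 by norm_num] at hgeo
  refine ⟨.of_nonneg_of_le (fun _ => norm_nonneg _) hterm hgeo.summable, ?_⟩
  calc ‖∑' α, B (f α) (ψd (α + γ))‖ ≤ C * 2 ^ d := tsum_of_norm_bounded hgeo hterm
    _ = 2 ^ d * C₀ * ℓ ^ (∑ i, γ i) * M (∑ i, γ i) * Cf * Cg := by ring

/-- For `(f_α) ∈ Λ_{M,2ℓH}(E)` and a family `ψ^{(δ)}` with Roumieu-type bounds,
the series `Σ_α f_α * ψ^{(α+γ)}` converges absolutely in `E` with the norm bound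
`2^d C₀ ℓ^{|γ|} M_γ` times the product of the bounds. -/
theorem stmt11 (d : ℕ) {E F : Type*} [NormedAddCommGroup E] [NormedSpace ℝ E]
    [CompleteSpace E] [NormedAddCommGroup F] [NormedSpace ℝ F]
    (M : ℕ → ℝ) (C₀ H : ℝ) (hpos : ∀ p, 0 < M p)
    (hC₀ : 1 ≤ C₀) (hH : 1 ≤ H)
    (hM2 : ∀ p q : ℕ, M (p + q) ≤ C₀ * H ^ (p + q) * M p * M q)
    (B : E → F → E) (hB : ∀ (e : E) (f : F), ‖B e f‖ ≤ ‖e‖ * ‖f‖)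
    (ℓ : ℝ) (hℓ : 0 < ℓ)
    (f : (Fin d → ℕ) → E) (ψd : (Fin d → ℕ) → F) (Cf Cg : ℝ)
    (hf : ∀ α : Fin d → ℕ, (2 * ℓ * H) ^ (∑ i, α i) * M (∑ i, α i) * ‖f α‖ ≤ Cf)
    (hψ : ∀ δ : Fin d → ℕ, ‖ψd δ‖ ≤ Cg * (ℓ / H) ^ (∑ i, δ i) * M (∑ i, δ i)) :
    ∀ γ : Fin d → ℕ,
      Summable (fun α : Fin d → ℕ => ‖B (f α) (ψd (α + γ))‖) ∧
      ‖∑' α : Fin d → ℕ, B (f α) (ψd (α + γ))‖ ≤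
        2 ^ d * C₀ * ℓ ^ (∑ i, γ i) * M (∑ i, γ i) * Cf * Cg :=
  stmt11_general d M C₀ H hpos hC₀ hH hM2 B hB ℓ hℓ f ψd Cf Cg hf hψ
end

section
/- Let S : X → Y be a continuous linear map between locally convex Hausdorff spaces, let Z be a lcHs and ι : Z → Y' a topological isomorphism (Y' with strong topology). Assume X is Mackey, X/ker S is complete, im S is Mackey in the topology induced by Y, the composition R = Sᵗ ∘ ι is injective, and im R is weakly closed in X'. Then S is surjective. -/
/-!
Since `ι` is onto `Y'`, the hypotheses say that the transpose `Sᵗ : Y' → X'` is injective and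
has weak*-closed range. Injectivity of `Sᵗ` makes `im S` dense (Hahn–Banach). A weak*-closed
subspace of `X'` is the annihilator of its pre-annihilator, which for `im Sᵗ` is `ker S`, so every
functional vanishing on `ker S` factors through `S`.

The Mackey hypothesis makes the topology of `X` the weak one, so a neighbourhood of `0` in `X` is
controlled by finitely many functionals. After correcting `x` by an element of `ker S` (a projection
in a finite-dimensional space), these functionals become functionals of `S x`. Hence the induced
map `X ⧸ ker S → Y` is a topological embedding; its domain is complete, so its range `im S` is
closed, and being dense it is all of `Y`.
-/

def IsMackeySpace (X : Type*) [AddCommGroup X] [Module ℝ X]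
    [tX : TopologicalSpace X] : Prop :=
  ∀ t : TopologicalSpace X,
    @IsTopologicalAddGroup X t _ →
    @ContinuousSMul ℝ X _ _ t →
    @LocallyConvexSpace ℝ X _ _ _ _ t →
    ({φ : X →ₗ[ℝ] ℝ | @Continuous X ℝ t _ ⇑φ} =
      {φ : X →ₗ[ℝ] ℝ | @Continuous X ℝ tX _ ⇑φ}) →
    t ≤ tX

open Filter Topology

theorem Submodule.exists_strongDual_ne_zero_eq_zero_of_notMem {E : Type*} [AddCommGroup E] [Module ℝ E]
    [TopologicalSpace E] [IsTopologicalAddGroup E] [ContinuousSMul ℝ E] [LocallyConvexSpace ℝ E]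
    {p : Submodule ℝ E} (hp : IsClosed (p : Set E)) {v : E} (hv : v ∉ p) :
    ∃ f : StrongDual ℝ E, f v ≠ 0 ∧ ∀ y ∈ p, f y = 0 := by
  obtain ⟨f, u, hfp, huf⟩ := geometric_hahn_banach_closed_point p.convex hp hv
  -- a linear functional bounded above on a subspace vanishes on it
  have hf : ∀ y ∈ p, f y = 0 := by
    intro y hy
    by_contra hne
    have := hfp (((u + 1) / f y) • y) (p.smul_mem _ hy)
    rw [map_smul, smul_eq_mul, div_mul_cancel₀ _ hne] at this
    linarith
  have hu : 0 < u := by simpa using hfp 0 p.zero_mem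
  exact ⟨f, (hu.trans huf).ne', hf⟩

theorem WeakBilin.mem_of_isClosed_of_forall_eq_zero {E F : Type*} [AddCommGroup E] [Module ℝ E]
    [AddCommGroup F] [Module ℝ F] (B : E →ₗ[ℝ] F →ₗ[ℝ] ℝ) {W : Submodule ℝ E}
    (hW : IsClosed (X := WeakBilin B) (W : Set E)) {e : E}
    (he : ∀ y, (∀ w ∈ W, B w y = 0) → B e y = 0) : e ∈ W := by
  by_contra h
  obtain ⟨f, hfe, hfW⟩ := Submodule.exists_strongDual_ne_zero_eq_zero_of_notMem
    (p := (show Submodule ℝ (WeakBilin B) from W)) hW h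
  obtain ⟨y, rfl⟩ := LinearMap.dualEmbedding_surjective B f
  exact hfe (he y hfW)

section Transpose

variable {X Y : Type*} [AddCommGroup X] [Module ℝ X] [TopologicalSpace X]
  [AddCommGroup Y] [Module ℝ Y] [TopologicalSpace Y]

noncomputable def ContinuousLinearMap.transpose (S : X →L[ℝ] Y) :
    StrongDual ℝ Y →ₗ[ℝ] StrongDual ℝ X :=
  (ContinuousLinearMap.precomp ℝ S).toLinearMap

@[simp]
theorem ContinuousLinearMap.transpose_apply (S : X →L[ℝ] Y) (η : StrongDual ℝ Y) :
    S.transpose η = η ∘L S :=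
  rfl

theorem ContinuousLinearMap.coe_range_transpose {Z : Type*} (S : X →L[ℝ] Y)
    {ι : Z → StrongDual ℝ Y} (hι : Function.Surjective ι) :
    (LinearMap.range S.transpose : Set (StrongDual ℝ X)) =
      {ψ : WeakDual ℝ X | ∃ z, ∀ x, ψ x = ι z (S x)} := by
  ext ψ
  simp only [SetLike.mem_coe, LinearMap.mem_range]
  constructor
  · rintro ⟨η, rfl⟩
    obtain ⟨z, rfl⟩ := hι η
    exact ⟨z, fun x => rfl⟩
  · rintro ⟨z, hz⟩
    exact ⟨ι z, ContinuousLinearMap.ext fun x => (hz x).symm⟩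

variable [IsTopologicalAddGroup Y] [ContinuousSMul ℝ Y] [LocallyConvexSpace ℝ Y]

theorem ContinuousLinearMap.denseRange_of_injective_transpose (S : X →L[ℝ] Y)
    (hS : Function.Injective S.transpose) : DenseRange S := by
  intro y
  by_contra hy
  obtain ⟨f, hfy, hfS⟩ := Submodule.exists_strongDual_ne_zero_eq_zero_of_notMem
    (p := (LinearMap.range (S : X →ₗ[ℝ] Y)).topologicalClosure)
    (Submodule.isClosed_topologicalClosure _) (v := y)
    (by rwa [← SetLike.mem_coe, Submodule.topologicalClosure_coe, LinearMap.coe_range,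
      ContinuousLinearMap.coe_coe])
  have hfS0 : S.transpose f = S.transpose 0 := by
    ext x
    exact hfS _ ((LinearMap.range (S : X →ₗ[ℝ] Y)).le_topologicalClosure ⟨x, rfl⟩)
  exact hfy (by rw [hS hfS0]; rfl)

theorem ContinuousLinearMap.mem_range_transpose_of_isClosed [T1Space Y] (S : X →L[ℝ] Y)
    (hS : IsClosed (X := WeakDual ℝ X) (LinearMap.range S.transpose : Set (StrongDual ℝ X)))
    {φ : StrongDual ℝ X} (hφ : ∀ x, S x = 0 → φ x = 0) : φ ∈ LinearMap.range S.transpose :=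
  WeakBilin.mem_of_isClosed_of_forall_eq_zero (topDualPairing ℝ X) hS fun x hx =>
    hφ x (SeparatingDual.eq_zero_of_forall_dual_eq_zero fun η => hx _ ⟨η, rfl⟩)

end Transpose

section Mackey

variable {X : Type*} [AddCommGroup X] [Module ℝ X] [TopologicalSpace X]

-- `t ≤ tX` says that `t` is finer than `tX`; for the weak topology `t` this forces `t = tX`.
theorem IsMackeySpace.isInducing_pi (hM : IsMackeySpace X) :
    IsInducing (LinearMap.pi fun φ : StrongDual ℝ X => (φ : X →ₗ[ℝ] ℝ)) := by
  set e := LinearMap.pi fun φ : StrongDual ℝ X => (φ : X →ₗ[ℝ] ℝ)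
  have he : Continuous e := continuous_pi fun φ => φ.continuous
  refine ⟨le_antisymm he.le_induced (hM _ (topologicalAddGroup_induced e)
    (continuousSMul_induced e) (LocallyConvexSpace.induced e) ?_)⟩
  ext φ
  refine ⟨fun h => continuous_le_dom he.le_induced h, fun h => ?_⟩
  exact @Continuous.comp _ _ _ (.induced e _) _ _ e (fun v => v ⟨φ, h⟩)
    (continuous_apply _) continuous_induced_dom

theorem IsMackeySpace.exists_finset_mem_comap (hM : IsMackeySpace X) {U : Set X}
    (hU : U ∈ 𝓝 (0 : X)) : ∃ I : Finset (StrongDual ℝ X),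
      U ∈ comap (ContinuousLinearMap.pi fun φ : I => (φ : StrongDual ℝ X)) (𝓝 0) := by
  rw [hM.isInducing_pi.nhds_eq_comap, map_zero, nhds_pi, mem_comap] at hU
  obtain ⟨W, hW, hWU⟩ := hU
  obtain ⟨I, t, ht, hIt⟩ := mem_pi'.1 hW
  exact ⟨I, mem_comap.2 ⟨Set.univ.pi fun φ : I => t φ,
    set_pi_mem_nhds Set.finite_univ fun φ _ => ht φ,
    fun x hx => hWU (hIt fun φ hφ => hx ⟨φ, hφ⟩ trivial)⟩⟩

end Mackey

section KernelCorrection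

variable {X Y : Type*} [AddCommGroup X] [Module ℝ X] [TopologicalSpace X]
  [AddCommGroup Y] [Module ℝ Y] [TopologicalSpace Y]

theorem ContinuousLinearMap.exists_sub_ker_eq_comp (S : X →L[ℝ] Y)
    (hS : ∀ φ : StrongDual ℝ X, (∀ x, S x = 0 → φ x = 0) → φ ∈ LinearMap.range S.transpose)
    {ι : Type*} [Fintype ι] (T : X →L[ℝ] (ι → ℝ)) :
    ∃ G : Y →L[ℝ] (ι → ℝ), ∀ x, ∃ n, S n = 0 ∧ T (x - n) = G (S x) := by
  set K := (LinearMap.ker (S : X →ₗ[ℝ] Y)).map (T : X →ₗ[ℝ] (ι → ℝ))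
  obtain ⟨p, hp⟩ := Submodule.ClosedComplemented.of_finiteDimensional K
  -- `χ x = T x - p (T x)` is `T (x - n)` for some `n ∈ ker S`, and `χ` kills `ker S`
  set χ := T - K.subtypeL ∘L p ∘L T
  have hχ : ∀ n, S n = 0 → χ n = 0 := fun n hn => by
    simp [χ, hp ⟨T n, Submodule.mem_map_of_mem (p := LinearMap.ker (S : X →ₗ[ℝ] Y)) hn⟩]
  choose η hη using fun i => hS ((ContinuousLinearMap.proj i).comp χ) fun n hn => by
    simp [hχ n hn]
  refine ⟨ContinuousLinearMap.pi η, fun x => ?_⟩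
  obtain ⟨n, hn, hTn⟩ := Submodule.mem_map.1 (p (T x)).2
  refine ⟨n, hn, funext fun i => ?_⟩
  have hTn : T n = p (T x) := hTn
  simpa [χ, hTn] using (congrArg (· x) (hη i)).symm

theorem IsMackeySpace.exists_nhds_zero_forall_exists_sub_mem (hM : IsMackeySpace X)
    (S : X →L[ℝ] Y)
    (hS : ∀ φ : StrongDual ℝ X, (∀ x, S x = 0 → φ x = 0) → φ ∈ LinearMap.range S.transpose)
    {U : Set X} (hU : U ∈ 𝓝 (0 : X)) :
    ∃ V ∈ 𝓝 (0 : Y), ∀ x, S x ∈ V → ∃ n, S n = 0 ∧ x - n ∈ U := by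
  obtain ⟨I, hI⟩ := hM.exists_finset_mem_comap hU
  obtain ⟨B, hB, hBU⟩ := mem_comap.1 hI
  obtain ⟨G, hG⟩ := S.exists_sub_ker_eq_comp hS
    (ContinuousLinearMap.pi fun φ : I => (φ : StrongDual ℝ X))
  refine ⟨G ⁻¹' B, G.continuous.tendsto' 0 0 (map_zero G) hB, fun x hx => ?_⟩
  obtain ⟨n, hn, hxn⟩ := hG x
  exact ⟨n, hn, hBU (by rw [Set.mem_preimage, hxn]; exact hx)⟩

end KernelCorrection

theorem ContinuousLinearMap.isInducing_liftQ_ker {R X Y : Type*} [Ring R]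
    [AddCommGroup X] [Module R X] [TopologicalSpace X] [IsTopologicalAddGroup X]
    [AddCommGroup Y] [Module R Y] [TopologicalSpace Y] [IsTopologicalAddGroup Y] (S : X →L[R] Y)
    (hS : ∀ U ∈ 𝓝 (0 : X), ∃ V ∈ 𝓝 (0 : Y), ∀ x, S x ∈ V → ∃ n, S n = 0 ∧ x - n ∈ U) :
    IsInducing ((LinearMap.ker (S : X →ₗ[R] Y)).liftQ (S : X →ₗ[R] Y) le_rfl) := by
  set N := LinearMap.ker (S : X →ₗ[R] Y)
  have hcont : Continuous (N.liftQ (S : X →ₗ[R] Y) le_rfl) :=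
    N.isQuotientMap_mkQ.continuous_iff.2 S.continuous
  rw [IsTopologicalAddGroup.isInducing_iff_nhds_zero]
  refine le_antisymm (by simpa using (hcont.tendsto 0).le_comap) fun U' hU' => ?_
  obtain ⟨V, hV, hVU⟩ := hS _ (N.continuous_mkQ.tendsto' 0 0 rfl hU')
  refine ⟨V, hV, fun q hq => ?_⟩
  obtain ⟨x, rfl⟩ := N.mkQ_surjective q
  obtain ⟨n, hn, hxn⟩ := hVU x hq
  simpa [(Submodule.Quotient.mk_eq_zero N).2 hn] using hxn

theorem isClosed_range_of_isInducing_of_complete {G H F : Type*} [AddCommGroup G]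
    [TopologicalSpace G] [IsTopologicalAddGroup G] [AddCommGroup H] [TopologicalSpace H]
    [IsTopologicalAddGroup H] [T0Space H] [FunLike F G H] [AddMonoidHomClass F G H]
    (hG : @CompleteSpace G (IsTopologicalAddGroup.rightUniformSpace G)) {f : F}
    (hf : IsInducing f) : IsClosed (Set.range f) := by
  let _ := IsTopologicalAddGroup.rightUniformSpace G
  let _ := IsTopologicalAddGroup.rightUniformSpace H
  have := isUniformAddGroup_of_addCommGroup (G := G)
  have := isUniformAddGroup_of_addCommGroup (G := H)
  exact (AddMonoidHom.isUniformInducing_of_isInducing hf).isComplete_range.isClosed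

theorem stmt12_general {X Y Z : Type*}
    [AddCommGroup X] [Module ℝ X] [TopologicalSpace X] [IsTopologicalAddGroup X]
    [AddCommGroup Y] [Module ℝ Y] [TopologicalSpace Y] [IsTopologicalAddGroup Y]
    [ContinuousSMul ℝ Y] [LocallyConvexSpace ℝ Y] [T2Space Y]
    [AddCommGroup Z] [Module ℝ Z] [TopologicalSpace Z]
    (S : X →L[ℝ] Y)
    (hXMackey : IsMackeySpace X)
    (hquot : @CompleteSpace (X ⧸ LinearMap.ker (S : X →ₗ[ℝ] Y))
      (IsTopologicalAddGroup.rightUniformSpace (X ⧸ LinearMap.ker (S : X →ₗ[ℝ] Y))))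
    (ι : Z ≃L[ℝ] (Y →L[ℝ] ℝ))
    (hRinj : Function.Injective fun z : Z => ((ι z).comp S : X →L[ℝ] ℝ))
    (hRclosed : IsClosed {ψ : WeakDual ℝ X | ∃ z : Z, ∀ x : X, ψ x = ι z (S x)}) :
    Function.Surjective S := by
  have hinj : Function.Injective S.transpose := fun η₁ η₂ h =>
    ι.symm.injective (hRinj (by simpa using h))
  rw [← S.coe_range_transpose ι.surjective] at hRclosed
  have hopen := fun U (hU : U ∈ 𝓝 (0 : X)) => hXMackey.exists_nhds_zero_forall_exists_sub_mem S
    (fun _ => S.mem_range_transpose_of_isClosed hRclosed) hU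
  have hclosed : IsClosed (Set.range S) := by
    have := isClosed_range_of_isInducing_of_complete hquot (S.isInducing_liftQ_ker hopen)
    rwa [← LinearMap.coe_range, Submodule.range_liftQ] at this
  rw [← Set.range_eq_univ, ← hclosed.closure_eq]
  exact (S.denseRange_of_injective_transpose hinj).closure_range

/-- Abstract surjectivity criterion: if `X` is Mackey, `X/ker S` is complete,
`im S` is Mackey in the induced topology, `ι : Z → Y'` is a topological isomorphism
onto the strong dual, `R = Sᵗ ∘ ι` is injective and has weakly closed image in `X'`,
then `S` is surjective. -/
theorem stmt12 {X Y Z : Type*}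
    [AddCommGroup X] [Module ℝ X] [TopologicalSpace X] [IsTopologicalAddGroup X]
    [ContinuousSMul ℝ X] [LocallyConvexSpace ℝ X] [T2Space X]
    [AddCommGroup Y] [Module ℝ Y] [TopologicalSpace Y] [IsTopologicalAddGroup Y]
    [ContinuousSMul ℝ Y] [LocallyConvexSpace ℝ Y] [T2Space Y]
    [AddCommGroup Z] [Module ℝ Z] [TopologicalSpace Z] [IsTopologicalAddGroup Z]
    [ContinuousSMul ℝ Z]
    (S : X →L[ℝ] Y)
    (hXMackey : IsMackeySpace X)
    (hquot : @CompleteSpace (X ⧸ LinearMap.ker (S : X →ₗ[ℝ] Y))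
      (IsTopologicalAddGroup.rightUniformSpace (X ⧸ LinearMap.ker (S : X →ₗ[ℝ] Y))))
    (himS : IsMackeySpace ↥(LinearMap.range (S : X →ₗ[ℝ] Y)))
    (ι : Z ≃L[ℝ] (Y →L[ℝ] ℝ))
    (hRinj : Function.Injective fun z : Z => ((ι z).comp S : X →L[ℝ] ℝ))
    (hRclosed : IsClosed {ψ : WeakDual ℝ X | ∃ z : Z, ∀ x : X, ψ x = ι z (S x)}) :
    Function.Surjective S :=
  stmt12_general S hXMackey hquot ι hRinj hRclosed
end

section
/- Let M be a weight sequence with (M.1), (M.2)' (with constants C₀ ≥ 1, H > 1). Fix q > 0. For ε ∈ (0,1] set θ = −log₂ ε and let χ_ε : ℝ^d → [0,1] be continuous with χ_ε(ξ) = 1 for |ξ| ≤ C₀e^θ/q and χ_ε(ξ) = 0 for |ξ| ≥ C₀e^θ/q + 1. Then for any Banach-space-valued continuous Φ with sup_ξ ‖Φ(ξ)‖ e^{ω_M(2^{log H} q ξ)} ≤ 1, the function Φ_ε = χ_ε · Φ satisfies sup_ξ ‖Φ(ξ) − Φ_ε(ξ)‖ e^{ω_M(qξ)} ≤ ε. 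-/
lemma stmt16_bdd (M : ℕ → ℝ) (hpos : ∀ p, 0 < M p)
    (hweight : Filter.Tendsto (fun p : ℕ => (M p / M 0) ^ ((p : ℝ)⁻¹))
      Filter.atTop Filter.atTop)
    (t : ℝ) (ht : 0 < t) :
    BddAbove (Set.range fun p : ℕ => Real.log (t ^ p * M 0 / M p)) := by
  obtain ⟨P, hP⟩ := Filter.eventually_atTop.mp (hweight.eventually_ge_atTop (t + 1))
  set f := fun p : ℕ => Real.log (t ^ p * M 0 / M p) with hf
  refine ⟨max 0 ((Finset.range (P + 1)).sup' (by simp) f), ?_⟩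
  rintro x ⟨p, rfl⟩
  by_cases hp : p ≤ P
  · exact le_max_of_le_right (Finset.le_sup' f (Finset.mem_range.mpr (by omega)))
  · push_neg at hp
    have h1 : t + 1 ≤ (M p / M 0) ^ ((p : ℝ)⁻¹) := hP p (by omega)
    have hMp0 : (0:ℝ) ≤ M p / M 0 := (div_pos (hpos p) (hpos 0)).le
    have h2 : (t + 1) ^ p ≤ M p / M 0 := by
      calc (t + 1) ^ p ≤ ((M p / M 0) ^ ((p : ℝ)⁻¹)) ^ p :=
            pow_le_pow_left₀ (by linarith) h1 p
        _ = (M p / M 0) ^ (((p : ℝ)⁻¹) * p) := by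
            rw [← Real.rpow_natCast ((M p / M 0) ^ ((p : ℝ)⁻¹)) p, ← Real.rpow_mul hMp0]
        _ = M p / M 0 := by
            rw [inv_mul_cancel₀ (by exact_mod_cast (by omega : p ≠ 0) : (p:ℝ) ≠ 0)]
            exact Real.rpow_one _
    have h3 : t ^ p * M 0 ≤ M p := by
      have h4 : t ^ p ≤ (t + 1) ^ p := pow_le_pow_left₀ ht.le (by linarith) p
      have h5 : (t + 1) ^ p * M 0 ≤ M p := (le_div_iff₀ (hpos 0)).mp h2
      nlinarith [hpos 0]
    have h6 : t ^ p * M 0 / M p ≤ 1 := (div_le_one (hpos p)).mpr h3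
    have : f p ≤ 0 := Real.log_nonpos (div_pos (mul_pos (pow_pos ht p) (hpos 0)) (hpos p)).le h6
    exact le_max_of_le_left this

lemma stmt16_chain (f : ℕ → ℝ) : ∀ N, (∀ p < N, f p ≤ f (p + 1)) → ∀ m ≤ N, f m ≤ f N := by
  intro N
  induction N with
  | zero => intro _ m hm; simp [Nat.le_zero.mp hm]
  | succ n ih =>
    intro h m hm
    rcases Nat.eq_or_lt_of_le hm with h1 | h1
    · rw [h1]
    · exact (ih (fun p hp => h p (by omega)) m (by omega)).trans (h n (by omega))

/-- Quasinormability cutoff estimate: if `sup_ξ ‖Φ(ξ)‖ e^{ω_M(2^{log H} q ξ)} ≤ 1`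
then the truncation `Φ_ε = χ_ε Φ` satisfies
`sup_ξ ‖Φ(ξ) − Φ_ε(ξ)‖ e^{ω_M(qξ)} ≤ ε`. -/
theorem stmt16 (d : ℕ) (M : ℕ → ℝ) (C₀ H : ℝ) (hpos : ∀ p, 0 < M p)
    (hweight : Filter.Tendsto (fun p : ℕ => (M p / M 0) ^ ((p : ℝ)⁻¹))
      Filter.atTop Filter.atTop)
    (hC₀ : 1 ≤ C₀) (hH : 1 < H)
    (hM1 : ∀ p : ℕ, 1 ≤ p → (M p) ^ 2 ≤ M (p - 1) * M (p + 1))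
    (hM2' : ∀ p : ℕ, M (p + 1) ≤ C₀ * H ^ p * M p)
    (ω : ℝ → ℝ)
    (hω : ∀ t : ℝ, 0 < t → ω t = ⨆ p : ℕ, Real.log (t ^ p * M 0 / M p))
    (hω0 : ω 0 = 0)
    (q : ℝ) (hq : 0 < q)
    (ε : ℝ) (hε : ε ∈ Set.Ioc (0 : ℝ) 1)
    (θ : ℝ) (hθ : θ = -(Real.log ε / Real.log 2))
    (χ : EuclideanSpace ℝ (Fin d) → ℝ) (hχc : Continuous χ)
    (hχ01 : ∀ ξ, χ ξ ∈ Set.Icc (0 : ℝ) 1)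
    (hχ1 : ∀ ξ : EuclideanSpace ℝ (Fin d), ‖ξ‖ ≤ C₀ * Real.exp θ / q → χ ξ = 1)
    (hχ0 : ∀ ξ : EuclideanSpace ℝ (Fin d), C₀ * Real.exp θ / q + 1 ≤ ‖ξ‖ → χ ξ = 0)
    {E : Type*} [NormedAddCommGroup E] [NormedSpace ℝ E]
    (Φ : EuclideanSpace ℝ (Fin d) → E) (hΦc : Continuous Φ)
    (hΦ : ∀ ξ, ‖Φ ξ‖ * Real.exp (ω (Real.rpow 2 (Real.log H) * q * ‖ξ‖)) ≤ 1) :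
    ∀ ξ, ‖Φ ξ - χ ξ • Φ ξ‖ * Real.exp (ω (q * ‖ξ‖)) ≤ ε := by
  intro ξ
  obtain ⟨hε0, hε1⟩ := hε
  have hlog2 : (0:ℝ) < Real.log 2 := Real.log_pos one_lt_two
  have hlogε : Real.log ε ≤ 0 := Real.log_nonpos hε0.le hε1
  have hθ0 : 0 ≤ θ := by
    rw [hθ]; exact neg_nonneg.mpr (div_nonpos_iff.mpr (Or.inr ⟨hlogε, hlog2.le⟩))
  have hC₀0 : (0:ℝ) < C₀ := by linarith
  by_cases hcase : ‖ξ‖ ≤ C₀ * Real.exp θ / q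
  · rw [hχ1 ξ hcase, one_smul, sub_self, norm_zero, zero_mul]
    exact hε0.le
  · push_neg at hcase
    set k : ℝ := Real.rpow 2 (Real.log H) with hk
    have hlogH : 0 < Real.log H := Real.log_pos hH
    have hkpos : 0 < k := Real.rpow_pos_of_pos two_pos _
    have hlogk : Real.log k = Real.log H * Real.log 2 := Real.log_rpow two_pos _
    have hlogk0 : 0 ≤ Real.log k := by rw [hlogk]; positivity
    set t : ℝ := q * ‖ξ‖ with htdef
    have hGt : C₀ * Real.exp θ < t := by
      rw [div_lt_iff₀ hq] at hcase
      rw [htdef]; linarith [mul_comm q ‖ξ‖]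
    have htpos : 0 < t := lt_trans (by positivity) hGt
    set f : ℕ → ℝ := fun p => Real.log (t ^ p * M 0 / M p) with hfdef
    set g : ℕ → ℝ := fun p => Real.log ((k * t) ^ p * M 0 / M p) with hgdef
    have hbf : BddAbove (Set.range f) := stmt16_bdd M hpos hweight t htpos
    have hbg : BddAbove (Set.range g) := stmt16_bdd M hpos hweight (k * t) (by positivity)
    set L : ℝ := Real.log (t / C₀) with hLdef
    have hLθ : θ < L := by
      rw [hLdef]
      exact (Real.lt_log_iff_exp_lt (by positivity)).mpr ((lt_div_iff₀ hC₀0).mpr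
        (by linarith [mul_comm C₀ (Real.exp θ)]))
    set N : ℕ := ⌈L / Real.log H⌉₊ with hNdef
    -- g p = f p + p * log k
    have hgf : ∀ p : ℕ, g p = f p + p * Real.log k := by
      intro p
      have h1 : (k * t) ^ p * M 0 / M p = k ^ p * (t ^ p * M 0 / M p) := by
        rw [mul_pow]; ring
      rw [hgdef]; simp only
      rw [h1, Real.log_mul (pow_pos hkpos p).ne' (div_pos (mul_pos (pow_pos htpos p) (hpos 0)) (hpos p)).ne', Real.log_pow]
      ring
    -- step
    have hstep : ∀ p < N, f p ≤ f (p + 1) := by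
      intro p hp
      have hp' : (p : ℝ) < L / Real.log H := Nat.lt_ceil.mp hp
      have hHp : C₀ * H ^ p < t := by
        have h1 : (p : ℝ) * Real.log H < L := (lt_div_iff₀ hlogH).mp hp'
        have hH0 : (0:ℝ) < H := lt_trans one_pos hH
        have h2 : (H : ℝ) ^ p < t / C₀ := by
          have e1 : (H:ℝ) ^ p = Real.exp ((p:ℝ) * Real.log H) := by
            rw [← Real.log_pow, Real.exp_log (pow_pos hH0 p)]
          rw [e1, ← Real.exp_log (show (0:ℝ) < t / C₀ by positivity)]
          exact Real.exp_lt_exp.mpr h1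
        calc C₀ * H ^ p < C₀ * (t / C₀) := by
              exact (mul_lt_mul_iff_right₀ hC₀0).mpr h2
          _ = t := by field_simp
      have key : t ^ p * M 0 / M p ≤ t ^ (p + 1) * M 0 / M (p + 1) := by
        rw [div_le_div_iff₀ (hpos p) (hpos (p + 1))]
        have h1 : M (p + 1) ≤ C₀ * H ^ p * M p := hM2' p
        have h3 : (0:ℝ) ≤ t ^ p * M 0 := (mul_pos (pow_pos htpos p) (hpos 0)).le
        calc t ^ p * M 0 * M (p + 1) ≤ t ^ p * M 0 * (C₀ * H ^ p * M p) :=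
              mul_le_mul_of_nonneg_left h1 h3
          _ ≤ t ^ p * M 0 * (t * M p) :=
              mul_le_mul_of_nonneg_left
                (mul_le_mul_of_nonneg_right hHp.le (hpos p).le) h3
          _ = t ^ (p + 1) * M 0 * M p := by ring
      exact Real.log_le_log (div_pos (mul_pos (pow_pos htpos p) (hpos 0)) (hpos p)) key
    have hchain : ∀ m ≤ N, f m ≤ f N := stmt16_chain f N hstep
    -- key sup inequality
    have hkey : ∀ p : ℕ, f p + N * Real.log k ≤ ⨆ p, g p := by
      intro p
      rcases le_or_gt p N with h | h
      · calc f p + N * Real.log k ≤ f N + N * Real.log k := by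
              linarith [hchain p h]
          _ = g N := by rw [hgf N]
          _ ≤ ⨆ p, g p := le_ciSup hbg N
      · calc f p + N * Real.log k ≤ f p + p * Real.log k := by
              have : (N : ℝ) ≤ p := by exact_mod_cast h.le
              nlinarith
          _ = g p := (hgf p).symm
          _ ≤ ⨆ p, g p := le_ciSup hbg p
    have hNlogk : -Real.log ε ≤ (N : ℝ) * Real.log k := by
      have h1 : L / Real.log H ≤ (N : ℝ) := Nat.le_ceil _
      have h2 : θ * Real.log 2 = -Real.log ε := by
        rw [hθ]; field_simp
      have h3 : L / Real.log H * Real.log k = L * Real.log 2 := by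
        rw [hlogk]; field_simp
      have h4 : L / Real.log H * Real.log k ≤ (N : ℝ) * Real.log k :=
        mul_le_mul_of_nonneg_right h1 hlogk0
      nlinarith [mul_le_mul_of_nonneg_right hLθ.le hlog2.le]
    have hωle : ω t ≤ ω (k * t) + Real.log ε := by
      rw [hω t htpos, hω (k * t) (by positivity)]
      refine ciSup_le fun p => ?_
      have h1 := hkey p
      have h2 := hNlogk
      linarith
    -- final assembly
    have hnorm : ‖Φ ξ - χ ξ • Φ ξ‖ ≤ ‖Φ ξ‖ := by
      have h1 : Φ ξ - χ ξ • Φ ξ = (1 - χ ξ) • Φ ξ := by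
        rw [sub_smul, one_smul]
      rw [h1, norm_smul, Real.norm_eq_abs]
      obtain ⟨ha, hb⟩ := hχ01 ξ
      have : |1 - χ ξ| ≤ 1 := by rw [abs_le]; constructor <;> linarith
      nlinarith [norm_nonneg (Φ ξ)]
    have hΦξ := hΦ ξ
    have hkt : Real.rpow 2 (Real.log H) * q * ‖ξ‖ = k * t := by
      rw [hk, htdef]; ring
    rw [hkt] at hΦξ
    have hexp : Real.exp (ω t) ≤ Real.exp (ω (k * t)) * ε := by
      calc Real.exp (ω t) ≤ Real.exp (ω (k * t) + Real.log ε) := Real.exp_le_exp.mpr hωle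
        _ = Real.exp (ω (k * t)) * ε := by rw [Real.exp_add, Real.exp_log hε0]
    calc ‖Φ ξ - χ ξ • Φ ξ‖ * Real.exp (ω t)
        ≤ ‖Φ ξ‖ * (Real.exp (ω (k * t)) * ε) := by
          have := mul_le_mul hnorm hexp (Real.exp_pos _).le (norm_nonneg _)
          linarith
      _ = (‖Φ ξ‖ * Real.exp (ω (k * t))) * ε := by ring
      _ ≤ 1 * ε := mul_le_mul_of_nonneg_right hΦξ hε0.le
      _ = ε := one_mul ε
end
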